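/- arXiv:2202.11627 — 2 statements merged into one kernel-verified Lean document; each statement's English description precedes it below -/
import Mathlib

section
/- For every integer n ≥ 2, the number of U-equivalence classes of paths of length n in ℰ equals the binomial coefficient C(n−1, ⌊(n−2)/2⌋). -/
/-- Steps of a Dyck path with catastrophes: up-step `U`, down-step `D`,
and catastrophe step `C k` of size `k` (valid paths only use `k ≥ 2`). -/
inductive Step where
  | U : Step
  | D : Step
  | C : ℕ → Step
  deriving DecidableEq

/-- The vertical displacement of a step. -/
def Step.val : Step → ℤ
  | .U => 1
  | .D => -1
  | .C k => -(k : ℤ)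

/-- The height (ordinate) of the path after its first `i` steps. -/
def hgt (P : List Step) (i : ℕ) : ℤ := ((P.take i).map Step.val).sum

/-- `InE P` means `P` is a Dyck path with catastrophes (a member of ℰ):
it stays at height ≥ 0, ends on the x-axis, and every catastrophe step
`C k` has `k ≥ 2` and starts at height `k` (hence ends on the x-axis). -/
def InE (P : List Step) : Prop :=
  (∀ i, 0 ≤ hgt P i) ∧ hgt P P.length = 0 ∧
    ∀ i k, P[i]? = some (Step.C k) → 2 ≤ k ∧ hgt P i = (k : ℤ)

/-- `(UD)^k`. -/
def UDpow (k : ℕ) : List Step := (List.replicate k [Step.U, Step.D]).flatten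

/-- `(DU)^k`. -/
def DUpow (k : ℕ) : List Step := (List.replicate k [Step.D, Step.U]).flatten

/-- `U^k`. -/
def Upow (k : ℕ) : List Step := List.replicate k Step.U

/-- `C_s` with the convention `C_1 = D`. -/
def cfin (s : ℕ) : Step := if s = 1 then Step.D else Step.C s

/-- Test whether a step is a catastrophe step. -/
def isCatB : Step → Bool
  | .C _ => true
  | _ => false

/-- The number of catastrophe steps in a path. -/
def catCount (P : List Step) : ℕ := P.countP isCatB

/-- The number of equivalence classes, for the equivalence `E`, of paths of
length `n` in ℰ. -/
noncomputable def nClasses (E : List Step → List Step → Prop) (n : ℕ) : ℕ :=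
  Nat.card (Quot (fun P Q : {P : List Step // InE P ∧ P.length = n} => E P.1 Q.1))

/-- Two paths are `U`-equivalent when their up-steps occur at the same positions. -/
def UEquiv (P Q : List Step) : Prop :=
  ∀ i : ℕ, P[i]? = some Step.U ↔ Q[i]? = some Step.U

/-!
A non-up step lowers the height by at least one, so the `±1` walk of the up-step mask of a path
in ℰ dominates the path: the mask is a nonnegative `±1` walk whose last letter is not `U`.
Conversely every such mask is realised by following it with `U`/`D` steps and replacing the last
step by the catastrophe back to the axis (`D` when the height there is `1`). Since U-equivalence
is equality of masks, the classes of length `n` correspond to nonnegative walks of length `n - 1`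
ending at height `≥ 1`. Walks of length `N` ending at height `≥ h` satisfy Pascal's recursion in
`(N, h)` and number `C(N, ⌊(N + h + 1)/2⌋)`; for `h = 1` this is `C(n - 1, ⌊(n - 2)/2⌋)` by
symmetry.
-/

def signWeight (b : Bool) : ℤ := if b then 1 else -1

@[simp] lemma signWeight_true : signWeight true = 1 := rfl

@[simp] lemma signWeight_false : signWeight false = -1 := rfl

def signSum (l : List Bool) : ℤ := (l.map signWeight).sum

@[simp] lemma signSum_nil : signSum [] = 0 := rfl

@[simp] lemma signSum_cons (b : Bool) (l : List Bool) :
    signSum (b :: l) = signWeight b + signSum l := by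
  simp [signSum]

lemma signSum_reverse (l : List Bool) : signSum l.reverse = signSum l := by
  simp [signSum, List.sum_reverse]

def SuffixNonneg (l : List Bool) : Prop := ∀ i, 0 ≤ signSum (l.drop i)

lemma suffixNonneg_nil : SuffixNonneg [] := fun i => by simp

lemma SuffixNonneg.signSum_nonneg {l : List Bool} (hl : SuffixNonneg l) : 0 ≤ signSum l := hl 0

lemma suffixNonneg_cons {b : Bool} {l : List Bool} :
    SuffixNonneg (b :: l) ↔ 0 ≤ signSum (b :: l) ∧ SuffixNonneg l := by
  refine ⟨fun h => ⟨h 0, fun i => h (i + 1)⟩, fun ⟨h0, h⟩ i => ?_⟩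
  cases i with
  | zero => exact h0
  | succ i => exact h i

def ballotSet (N h : ℕ) : Set (List Bool) :=
  {l | l.length = N ∧ SuffixNonneg l ∧ (h : ℤ) ≤ signSum l}

lemma ballotSet_finite (N h : ℕ) : (ballotSet N h).Finite :=
  (List.finite_length_eq Bool N).subset fun _ hl => hl.1

lemma ballotSet_zero_zero : ballotSet 0 0 = {[]} := by
  ext l
  simp only [ballotSet, List.length_eq_zero_iff, Set.mem_ofPred_eq, Set.mem_singleton_iff]
  constructor
  · exact fun h => h.1
  · rintro rfl
    exact ⟨rfl, suffixNonneg_nil, le_rfl⟩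

lemma ballotSet_zero_succ (h : ℕ) : ballotSet 0 (h + 1) = ∅ := by
  ext l
  simp only [ballotSet, List.length_eq_zero_iff, Set.mem_ofPred_eq, Set.mem_empty_iff_false,
    iff_false, not_and]
  rintro rfl -
  simp only [signSum_nil]
  omega

lemma ballotSet_succ_zero (N : ℕ) :
    ballotSet (N + 1) 0 = List.cons true '' ballotSet N 0 ∪ List.cons false '' ballotSet N 1 := by
  ext (_ | ⟨b, l⟩)
  · simp [ballotSet]
  · by_cases hl : SuffixNonneg l
    · have := hl.signSum_nonneg
      cases b <;> simp [ballotSet, suffixNonneg_cons, hl]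
      omega
    · simp [ballotSet, suffixNonneg_cons, hl]

lemma ballotSet_succ_succ (N h : ℕ) :
    ballotSet (N + 1) (h + 1) =
      List.cons true '' ballotSet N h ∪ List.cons false '' ballotSet N (h + 2) := by
  ext (_ | ⟨b, l⟩)
  · simp [ballotSet]
  · by_cases hl : SuffixNonneg l
    · have := hl.signSum_nonneg
      cases b <;> simp [ballotSet, suffixNonneg_cons, hl] <;> omega
    · simp [ballotSet, suffixNonneg_cons, hl]

lemma ncard_cons_image_union {A B : Set (List Bool)} (hA : A.Finite) (hB : B.Finite) :
    (List.cons true '' A ∪ List.cons false '' B).ncard = A.ncard + B.ncard := by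
  have hdisj : Disjoint (List.cons true '' A) (List.cons false '' B) := by
    rw [Set.disjoint_left]
    rintro _ ⟨_, -, rfl⟩ ⟨_, -, h⟩
    simp at h
  rw [Set.ncard_union_eq hdisj (hA.image _) (hB.image _),
    Set.ncard_image_of_injective _ List.cons_injective,
    Set.ncard_image_of_injective _ List.cons_injective]

lemma choose_succ_half (N : ℕ) :
    (N + 1).choose ((N + 2) / 2) = N.choose ((N + 1) / 2) + N.choose ((N + 2) / 2) := by
  rw [show (N + 2) / 2 = N / 2 + 1 by omega, Nat.choose_succ_succ',
    Nat.choose_symm_of_eq_add (show N = N / 2 + (N + 1) / 2 by omega)]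

theorem ncard_ballotSet (N h : ℕ) : (ballotSet N h).ncard = N.choose ((N + h + 1) / 2) := by
  induction N generalizing h with
  | zero =>
    cases h with
    | zero => simp [ballotSet_zero_zero]
    | succ h => simp [ballotSet_zero_succ, Nat.choose_eq_zero_of_lt]
  | succ N ih =>
    cases h with
    | zero =>
      rw [ballotSet_succ_zero, ncard_cons_image_union (ballotSet_finite _ _) (ballotSet_finite _ _),
        ih, ih, choose_succ_half]
    | succ h =>
      rw [ballotSet_succ_succ, ncard_cons_image_union (ballotSet_finite _ _) (ballotSet_finite _ _),
        ih, ih, show (N + 1 + (h + 1) + 1) / 2 = (N + h + 1) / 2 + 1 by omega,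
        show (N + (h + 2) + 1) / 2 = (N + h + 1) / 2 + 1 by omega, Nat.choose_succ_succ']

lemma card_quot_eq_card_range {α β : Type*} {r : α → α → Prop} (f : α → β)
    (hr : ∀ a b, r a b ↔ f a = f b) : Nat.card (Quot r) = Nat.card (Set.range f) :=
  Nat.card_congr ((Quot.congrRight hr).trans (Setoid.quotientKerEquivRange f))

def Step.isUp : Step → Bool
  | .U => true
  | _ => false

@[simp] lemma Step.isUp_eq_true {s : Step} : s.isUp = true ↔ s = .U := by
  cases s <;> simp [Step.isUp]

/-- Stored reversed, so that the ballot condition on the mask (every prefix has at least as many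
up-steps as other steps) becomes a condition on suffixes, which recurses along `cons`. -/
def upMask (P : List Step) : List Bool := (P.map Step.isUp).reverse

lemma uEquiv_iff_upMask_eq {P Q : List Step} (hPQ : P.length = Q.length) :
    UEquiv P Q ↔ upMask P = upMask Q := by
  have mask_eq_true (R : List Step) (i : ℕ) :
      (R.map Step.isUp)[i]? = some true ↔ R[i]? = some .U := by
    rw [List.getElem?_map]
    cases R[i]? <;> simp
  rw [upMask, upMask, List.reverse_inj]
  refine ⟨fun h => List.ext_getElem (by simpa using hPQ) fun i hP hQ => ?_, fun h i => ?_⟩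
  · have hi := h i
    rw [List.getElem?_eq_getElem (by simpa using hP), List.getElem?_eq_getElem (by simpa using hQ)]
      at hi
    rw [List.getElem_map, List.getElem_map, Bool.eq_iff_iff, Step.isUp_eq_true, Step.isUp_eq_true]
    simpa using hi
  · rw [← mask_eq_true, ← mask_eq_true, h]

lemma hgt_of_length_le {P : List Step} {j : ℕ} (hj : P.length ≤ j) :
    hgt P j = (P.map Step.val).sum := by
  rw [hgt, List.take_of_length_le hj]

lemma hgt_append_of_le {L M : List Step} {j : ℕ} (hj : j ≤ L.length) :
    hgt (L ++ M) j = hgt L j := by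
  rw [hgt, hgt, List.take_append_of_le_length hj]

lemma Step.val_le_signWeight_isUp {s : Step} (hs : s ≠ .C 0) : s.val ≤ signWeight s.isUp := by
  rcases s with _ | _ | _ | k <;> simp_all [Step.val, Step.isUp]

namespace InE

lemma ne_C_zero {P : List Step} (hP : InE P) {s : Step} (hs : s ∈ P) : s ≠ .C 0 := by
  rintro rfl
  obtain ⟨i, hi⟩ := List.mem_iff_getElem?.mp hs
  exact absurd (hP.2.2 i 0 hi).1 (by norm_num)

lemma hgt_le_signSum_take {P : List Step} (hP : InE P) (j : ℕ) :
    hgt P j ≤ signSum ((P.take j).map Step.isUp) := by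
  rw [hgt, signSum, List.map_map]
  exact List.sum_le_sum fun s hs =>
    Step.val_le_signWeight_isUp (hP.ne_C_zero (List.mem_of_mem_take hs))

lemma suffixNonneg_upMask {P : List Step} (hP : InE P) : SuffixNonneg (upMask P) := by
  intro i
  rw [upMask, List.drop_reverse, signSum_reverse, ← List.map_take]
  exact (hP.1 _).trans (hP.hgt_le_signSum_take _)

lemma upMask_mem_image {P : List Step} (hP : InE P) {N : ℕ} (hlen : P.length = N + 1) :
    upMask P ∈ List.cons false '' ballotSet N 1 := by
  obtain ⟨L, s, rfl⟩ := (List.eq_nil_or_concat' P).resolve_left (by rintro rfl; simp at hlen)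
  have hL : L.length = N := by simpa using hlen
  have hstart : 0 ≤ (L.map Step.val).sum := by
    simpa [hgt_append_of_le le_rfl, hgt_of_length_le le_rfl] using hP.1 L.length
  have hend : (L.map Step.val).sum + s.val = 0 := by
    have := hP.2.1
    rw [hgt_of_length_le le_rfl] at this
    simpa using this
  have hs : s.isUp = false := by
    rw [Bool.eq_false_iff, Ne, Step.isUp_eq_true]
    rintro rfl
    simp only [Step.val] at hend
    omega
  have hgood := hP.suffixNonneg_upMask
  rw [show upMask (L ++ [s]) = false :: upMask L by simp [upMask, hs]] at hgood ⊢
  obtain ⟨hnonneg, htail⟩ := suffixNonneg_cons.mp hgood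
  refine ⟨upMask L, ⟨by simp [upMask, hL], htail, ?_⟩, rfl⟩
  simp only [signSum_cons, signWeight_false] at hnonneg
  omega

end InE

def Step.ofBool (b : Bool) : Step := if b then .U else .D

@[simp] lemma Step.isUp_ofBool (b : Bool) : (Step.ofBool b).isUp = b := by
  cases b <;> rfl

@[simp] lemma Step.val_ofBool (b : Bool) : (Step.ofBool b).val = signWeight b := by
  cases b <;> rfl

@[simp] lemma isUp_cfin (m : ℕ) : (cfin m).isUp = false := by
  unfold cfin
  split <;> rfl

@[simp] lemma val_cfin (m : ℕ) : (cfin m).val = -m := by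
  unfold cfin
  split
  · subst m
    rfl
  · rfl

def maskPath (t : List Bool) : List Step :=
  t.reverse.map Step.ofBool ++ [cfin (signSum t).toNat]

lemma upMask_maskPath (t : List Bool) : upMask (maskPath t) = false :: t := by
  simp [upMask, maskPath, Function.comp_def]

lemma hgt_maskPath_of_le {t : List Bool} {j : ℕ} (hj : j ≤ t.length) :
    hgt (maskPath t) j = signSum (t.drop (t.length - j)) := by
  rw [maskPath, hgt_append_of_le (by simpa using hj)]
  simp [hgt, signSum, List.take_reverse, List.sum_reverse, Function.comp_def]

lemma hgt_maskPath_of_length_lt {t : List Bool} (ht : 0 ≤ signSum t) {j : ℕ}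
    (hj : t.length < j) :
    hgt (maskPath t) j = 0 := by
  rw [hgt_of_length_le (by simp [maskPath]; omega)]
  simp [maskPath, List.sum_reverse, Function.comp_def]
  rw [max_eq_left ht]
  exact add_neg_cancel (signSum t)

lemma inE_maskPath {t : List Bool} (ht : SuffixNonneg t) (hpos : 1 ≤ signSum t) :
    InE (maskPath t) := by
  refine ⟨fun j => ?_, hgt_maskPath_of_length_lt ht.signSum_nonneg (by simp [maskPath]),
    fun i k hik => ?_⟩
  · rcases le_or_gt j t.length with hj | hj
    · rw [hgt_maskPath_of_le hj]
      exact ht _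
    · rw [hgt_maskPath_of_length_lt ht.signSum_nonneg hj]
  · have hlen : (t.reverse.map Step.ofBool).length = t.length := by simp
    obtain hi | rfl | hi := lt_trichotomy i t.length
    · rw [maskPath, List.getElem?_append_left (by simpa using hi), List.getElem?_map] at hik
      obtain ⟨b, -, hb⟩ := Option.map_eq_some_iff.mp hik
      cases b <;> simp [Step.ofBool] at hb
    · rw [maskPath, ← hlen, List.getElem?_concat_length, Option.some_inj, cfin] at hik
      split_ifs at hik
      cases hik
      refine ⟨by omega, ?_⟩
      rw [hgt_maskPath_of_le le_rfl]
      simp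
      omega
    · rw [List.getElem?_eq_none (by simp [maskPath]; omega)] at hik
      cases hik

lemma range_upMask (N : ℕ) :
    Set.range (fun P : {P : List Step // InE P ∧ P.length = N + 1} => upMask P.1) =
      List.cons false '' ballotSet N 1 := by
  refine subset_antisymm ?_ ?_
  · rintro _ ⟨⟨P, hP, hlen⟩, rfl⟩
    exact hP.upMask_mem_image hlen
  · rintro _ ⟨t, ⟨hlen, ht, hpos⟩, rfl⟩
    exact ⟨⟨maskPath t, inE_maskPath ht hpos, by simp [maskPath, hlen]⟩, upMask_maskPath t⟩

/-- The number of U-equivalence classes of paths of length `n ≥ 2` in ℰ is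
`C(n-1, ⌊(n-2)/2⌋)`. -/
theorem count_UEquiv_classes (n : ℕ) (hn : 2 ≤ n) :
    nClasses UEquiv n = Nat.choose (n - 1) ((n - 2) / 2) := by
  obtain ⟨N, rfl⟩ : ∃ N, n = N + 1 + 1 := ⟨n - 2, by omega⟩
  rw [nClasses, card_quot_eq_card_range (fun P => upMask P.1)
      fun P Q : {P : List Step // InE P ∧ P.length = N + 1 + 1} =>
        uEquiv_iff_upMask_eq (P.2.2.trans Q.2.2.symm),
    Nat.card_coe_set_eq, range_upMask, Set.ncard_image_of_injective _ List.cons_injective,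
    ncard_ballotSet]
  exact Nat.choose_symm_of_eq_add (by omega)
end

section
/- Let c_n denote the number of C-equivalence classes of paths of length n in ℰ. Then c_0 = 1, c_1 = 0, and c_n = c_{n−1} + c_{n−2} for all n ≥ 2. -/
/-- Two paths are `C`-equivalent when, for every `k ≥ 2`, the catastrophe
steps `C k` occur at the same positions in both paths. -/
def CEquiv (P Q : List Step) : Prop :=
  ∀ k, 2 ≤ k → ∀ i : ℕ, P[i]? = some (Step.C k) ↔ Q[i]? = some (Step.C k)

lemma hgt_append_singleton_of_le {P : List Step} {i : ℕ} (s : Step) (hi : i ≤ P.length) :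
    hgt (P ++ [s]) i = hgt P i := by
  simp [hgt, List.take_append_of_le_length hi]

lemma hgt_of_length_le_s5 {P : List Step} {i : ℕ} (hi : P.length ≤ i) :
    hgt P i = hgt P P.length := by
  simp [hgt, List.take_of_length_le hi]

lemma hgt_append_singleton_length (P : List Step) (s : Step) :
    hgt (P ++ [s]) (P.length + 1) = hgt P P.length + s.val := by
  simp [hgt]

def Admissible (P : List Step) : Prop :=
  (∀ i, 0 ≤ hgt P i) ∧ ∀ i k, P[i]? = some (Step.C k) → 2 ≤ k ∧ hgt P i = (k : ℤ)

lemma inE_iff_admissible (P : List Step) : InE P ↔ Admissible P ∧ hgt P P.length = 0 := by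
  unfold InE Admissible
  tauto

lemma admissible_nil : Admissible [] :=
  ⟨fun i => by simp [hgt], fun i k h => by simp at h⟩

lemma admissible_append_singleton_iff (P : List Step) (s : Step) :
    Admissible (P ++ [s]) ↔ Admissible P ∧ 0 ≤ hgt P P.length + s.val ∧
      ∀ k, s = Step.C k → 2 ≤ k ∧ hgt P P.length = (k : ℤ) := by
  have hlast := hgt_append_singleton_length P s
  constructor
  · rintro ⟨hnonneg, hcat⟩
    refine ⟨⟨fun i => ?_, fun i k hk => ?_⟩, hlast ▸ hnonneg _, fun k hs => ?_⟩
    · rcases le_or_gt i P.length with hi | hi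
      · simpa [hgt_append_singleton_of_le s hi] using hnonneg i
      · simpa [hgt_of_length_le_s5 hi.le, hgt_append_singleton_of_le s le_rfl] using
          hnonneg P.length
    · have hi : i < P.length := (List.getElem?_eq_some_iff.1 hk).1
      simpa [hgt_append_singleton_of_le s hi.le, List.getElem?_append_left hi, hk] using
        hcat i k
    · subst hs
      simpa [hgt_append_singleton_of_le _ le_rfl] using hcat P.length k
  · rintro ⟨⟨hnonneg, hcat⟩, hend, hs⟩
    refine ⟨fun i => ?_, fun i k hk => ?_⟩
    · rcases le_or_gt i (P.length + 1) with hi | hi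
      · rcases Nat.lt_or_eq_of_le hi with hi | rfl
        · rw [hgt_append_singleton_of_le s (by omega)]; exact hnonneg i
        · rwa [hlast]
      · rw [hgt_of_length_le_s5 (by simp; omega)]; simpa using hlast ▸ hend
    · rcases lt_trichotomy i P.length with hi | rfl | hi
      · rw [List.getElem?_append_left hi] at hk
        rw [hgt_append_singleton_of_le s hi.le]; exact hcat i k hk
      · simp only [List.getElem?_append_right le_rfl, Nat.sub_self, List.getElem?_cons_zero,
          Option.some.injEq] at hk
        rw [hgt_append_singleton_of_le s le_rfl]; exact hs k hk
      · rw [List.getElem?_eq_none (by simp; omega)] at hk; cases hk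

def Step.catSize : Step → Option ℕ
  | .C k => some k
  | _ => none

/-- Read from right to left, so that appending a step to a path conses onto its profile. -/
def catProfile (P : List Step) : List (Option ℕ) := (P.map Step.catSize).reverse

@[simp] lemma catProfile_nil : catProfile [] = [] := rfl

@[simp] lemma catProfile_append_singleton (P : List Step) (s : Step) :
    catProfile (P ++ [s]) = s.catSize :: catProfile P := by
  simp [catProfile]

@[simp] lemma length_catProfile (P : List Step) : (catProfile P).length = P.length := by
  simp [catProfile]

/-- `Realizable σ h`: `σ` is the catastrophe profile of an admissible path ending at height `h`. -/
inductive Realizable : List (Option ℕ) → ℕ → Prop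
  | nil : Realizable [] 0
  | up {σ h} : Realizable σ h → Realizable (none :: σ) (h + 1)
  | down {σ h} : Realizable σ (h + 1) → Realizable (none :: σ) h
  | cat {σ k} : Realizable σ k → 2 ≤ k → Realizable (some k :: σ) 0

lemma Admissible.realizable {P : List Step} (hP : Admissible P) :
    Realizable (catProfile P) (hgt P P.length).toNat := by
  induction P using List.reverseRecOn with
  | nil => simpa [hgt] using Realizable.nil
  | append_singleton P s ih =>
    obtain ⟨hpre, hnonneg, hcat⟩ := (admissible_append_singleton_iff P s).1 hP
    specialize ih hpre
    have hh := hpre.1 P.length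
    simp only [catProfile_append_singleton, List.length_append, List.length_singleton,
      hgt_append_singleton_length]
    cases s with
    | U =>
      have hup : (hgt P P.length + Step.U.val).toNat = (hgt P P.length).toNat + 1 := by
        simp only [Step.val]; omega
      exact hup ▸ ih.up
    | D =>
      have hdown : (hgt P P.length).toNat = (hgt P P.length + Step.D.val).toNat + 1 := by
        simp only [Step.val] at hnonneg ⊢; omega
      exact (hdown ▸ ih).down
    | C k =>
      obtain ⟨hk, hPk⟩ := hcat k rfl
      have hzero : (hgt P P.length + (Step.C k).val).toNat = 0 := by simp [Step.val, hPk]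
      exact hzero ▸ Realizable.cat (by simpa [hPk] using ih) hk

lemma Realizable.exists_admissible {σ : List (Option ℕ)} {h : ℕ} (hσ : Realizable σ h) :
    ∃ P, Admissible P ∧ catProfile P = σ ∧ hgt P P.length = h := by
  induction hσ with
  | nil => exact ⟨[], admissible_nil, rfl, by simp [hgt]⟩
  | @up σ h _ ih =>
    obtain ⟨P, hP, rfl, hPh⟩ := ih
    refine ⟨P ++ [.U], (admissible_append_singleton_iff _ _).2 ⟨hP, ?_, nofun⟩,
      by simp [Step.catSize], ?_⟩ <;> simp [hgt_append_singleton_length, hPh, Step.val]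
    omega
  | @down σ h _ ih =>
    obtain ⟨P, hP, rfl, hPh⟩ := ih
    refine ⟨P ++ [.D], (admissible_append_singleton_iff _ _).2 ⟨hP, ?_, nofun⟩,
      by simp [Step.catSize], ?_⟩ <;> simp [hgt_append_singleton_length, hPh, Step.val]
  | @cat σ k _ hk ih =>
    obtain ⟨P, hP, rfl, hPk⟩ := ih
    refine ⟨P ++ [.C k], (admissible_append_singleton_iff _ _).2
      ⟨hP, ?_, fun j hj => ?_⟩, by simp [Step.catSize], ?_⟩
    · simp [hPk, Step.val]
    · cases hj; exact ⟨hk, hPk⟩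
    · simp [hgt_append_singleton_length, hPk, Step.val]

lemma realizable_catProfile_of_inE {P : List Step} (hP : InE P) : Realizable (catProfile P) 0 := by
  rw [inE_iff_admissible] at hP
  simpa [hP.2] using hP.1.realizable

lemma Realizable.exists_inE {σ : List (Option ℕ)} (hσ : Realizable σ 0) :
    ∃ P, InE P ∧ catProfile P = σ := by
  obtain ⟨P, hP, rfl, hPh⟩ := hσ.exists_admissible
  exact ⟨P, (inE_iff_admissible P).2 ⟨hP, by exact_mod_cast hPh⟩, rfl⟩

namespace Realizable

variable {σ : List (Option ℕ)} {h k : ℕ}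

lemma nil_iff : Realizable [] h ↔ h = 0 :=
  ⟨by rintro ⟨⟩; rfl, by rintro rfl; exact nil⟩

lemma some_cons_iff : Realizable (some k :: σ) h ↔ h = 0 ∧ 2 ≤ k ∧ Realizable σ k :=
  ⟨fun | cat hσ hk => ⟨rfl, hk, hσ⟩, fun ⟨hh, hk, hσ⟩ => hh ▸ cat hσ hk⟩

lemma none_cons_zero_iff : Realizable (none :: σ) 0 ↔ Realizable σ 1 :=
  ⟨fun | down hσ => hσ, down⟩

lemma sub_two (hσ : Realizable σ (h + 2)) : Realizable σ h := by
  generalize hh : h + 2 = h' at hσ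
  induction hσ generalizing h with
  | nil | cat => omega
  | @up σ h' hσ _ =>
    obtain rfl : h' = h + 1 := by omega
    exact hσ.down
  | @down σ h' _ ih =>
    obtain rfl : h' = h + 2 := by omega
    exact (ih rfl).down

lemma of_none_cons (hσ : Realizable (none :: σ) (h + 1)) : Realizable σ h := by
  rcases hσ with _ | hσ | hσ
  · exact hσ
  · exact hσ.sub_two

lemma exists_eq_none_cons (hσ : Realizable σ (h + 1)) : ∃ τ, σ = none :: τ := by
  rcases hσ with _ | _ | _ | _
  all_goals exact ⟨_, rfl⟩

end Realizable

/-- In path order: a final `C k` becomes a flat step followed by `C (k + 1)`; otherwise `C 2` is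
appended. -/
def grow : List (Option ℕ) → List (Option ℕ)
  | [] => [some 2]
  | none :: σ => some 2 :: none :: σ
  | some k :: σ => some (k + 1) :: none :: σ

@[simp] lemma length_grow (σ : List (Option ℕ)) : (grow σ).length = σ.length + 1 := by
  rcases σ with _ | ⟨_ | k, σ⟩ <;> rfl

lemma Realizable.grow {σ : List (Option ℕ)} (hσ : Realizable σ 0) (hne : σ ≠ []) :
    Realizable (grow σ) 0 := by
  rcases σ with _ | ⟨_ | k, σ⟩
  · exact (hne rfl).elim
  · exact .cat (Realizable.none_cons_zero_iff.1 hσ).up le_rfl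
  · obtain ⟨-, hk, hσ⟩ := Realizable.some_cons_iff.1 hσ
    exact .cat hσ.up (by omega)

lemma grow_inj {σ τ : List (Option ℕ)} (hσ : Realizable σ 0) (hτ : Realizable τ 0) :
    grow σ = grow τ ↔ σ = τ := by
  refine ⟨fun h => ?_, congrArg grow⟩
  rcases σ with _ | ⟨_ | k, σ⟩ <;> rcases τ with _ | ⟨_ | j, τ⟩ <;> simp [grow] at h ⊢
  all_goals simp_all [Realizable.some_cons_iff]

abbrev ValidProfile (n : ℕ) : Type := {σ : List (Option ℕ) // Realizable σ 0 ∧ σ.length = n}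

instance : Unique (ValidProfile 0) where
  default := ⟨[], .nil, rfl⟩
  uniq σ := Subtype.ext (List.eq_nil_of_length_eq_zero σ.2.2)

instance : IsEmpty (ValidProfile 1) where
  false := fun
    | ⟨[none], hσ, _⟩ => by simp [Realizable.none_cons_zero_iff, Realizable.nil_iff] at hσ
    | ⟨[some _], hσ, _⟩ => by simp [Realizable.some_cons_iff, Realizable.nil_iff] at hσ; omega

def extendProfile (m : ℕ) : ValidProfile (m + 1) ⊕ ValidProfile m → ValidProfile (m + 2)
  | .inl σ => ⟨grow σ.1, σ.2.1.grow (List.ne_nil_of_length_eq_add_one σ.2.2), by simp [σ.2.2]⟩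
  | .inr σ => ⟨none :: none :: σ.1, σ.2.1.up.down, by simp [σ.2.2]⟩

lemma extendProfile_injective (m : ℕ) : Function.Injective (extendProfile m) := by
  rintro (⟨σ, hσ, _⟩ | ⟨σ, hσ, _⟩) (⟨τ, hτ, _⟩ | ⟨τ, hτ, _⟩) h <;>
    simp only [extendProfile, Subtype.mk.injEq, Sum.inl.injEq, Sum.inr.injEq,
      List.cons.injEq, true_and] at h ⊢
  · exact (grow_inj hσ hτ).1 h
  · rcases σ with _ | ⟨_ | _, _⟩ <;> simp [grow] at h
  · rcases τ with _ | ⟨_ | _, _⟩ <;> simp [grow] at h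
  · exact h

lemma extendProfile_surjective (m : ℕ) : Function.Surjective (extendProfile m) := by
  rintro ⟨_ | ⟨_ | k, ρ⟩, hυ, hlen⟩
  · simp at hlen
  · obtain ⟨σ, rfl⟩ := (Realizable.none_cons_zero_iff.1 hυ).exists_eq_none_cons
    have hσ : Realizable σ 0 := (Realizable.none_cons_zero_iff.1 hυ).of_none_cons
    exact ⟨.inr ⟨σ, hσ, by simpa using hlen⟩, rfl⟩
  · obtain ⟨-, hk, hρ⟩ := Realizable.some_cons_iff.1 hυ
    obtain ⟨j, rfl⟩ : ∃ j, k = j + 1 := ⟨k - 1, by omega⟩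
    obtain ⟨σ, rfl⟩ := hρ.exists_eq_none_cons
    by_cases hj : j = 1
    · subst hj
      exact ⟨.inl ⟨none :: σ, hρ.sub_two, by simpa using hlen⟩, rfl⟩
    · exact ⟨.inl ⟨some j :: σ, .cat hρ.of_none_cons (by omega), by simpa using hlen⟩, rfl⟩

instance (n : ℕ) : Finite (ValidProfile n) := by
  induction n using Nat.twoStepInduction with
  | zero | one => infer_instance
  | more m _ _ => exact .of_surjective _ (extendProfile_surjective m)

lemma card_validProfile_add_two (m : ℕ) :
    Nat.card (ValidProfile (m + 2)) = Nat.card (ValidProfile (m + 1)) + Nat.card (ValidProfile m) :=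
  (Nat.card_eq_of_bijective _ ⟨extendProfile_injective m, extendProfile_surjective m⟩).symm.trans
    Nat.card_sum

lemma catSize_eq_catSize_iff {a b : Step} (ha : ∀ k, a = .C k → 2 ≤ k)
    (hb : ∀ k, b = .C k → 2 ≤ k) : a.catSize = b.catSize ↔ ∀ k, 2 ≤ k → (a = .C k ↔ b = .C k) := by
  cases a <;> cases b <;> simp_all [Step.catSize]
  exact ⟨fun h _ _ => by rw [h], fun h => ((h _ ha).1 rfl).symm⟩

lemma cEquiv_iff_catProfile_eq {P Q : List Step} (hP : InE P) (hQ : InE Q)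
    (hlen : P.length = Q.length) : CEquiv P Q ↔ catProfile P = catProfile Q := by
  have hpoint : ∀ i : ℕ, P[i]?.map Step.catSize = Q[i]?.map Step.catSize ↔
      ∀ k, 2 ≤ k → (P[i]? = some (Step.C k) ↔ Q[i]? = some (Step.C k)) := by
    intro i
    rcases lt_or_ge i P.length with hi | hi
    · have hsize := catSize_eq_catSize_iff (a := P[i]) (b := Q[i]'(hlen ▸ hi))
        (fun k hk => (hP.2.2 i k (by rw [List.getElem?_eq_getElem hi, hk])).1)
        (fun k hk => (hQ.2.2 i k (by rw [List.getElem?_eq_getElem (hlen ▸ hi), hk])).1)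
      simpa [List.getElem?_eq_getElem hi, List.getElem?_eq_getElem (hlen ▸ hi)] using hsize
    · simp [List.getElem?_eq_none hi, List.getElem?_eq_none (hlen ▸ hi)]
  rw [catProfile, catProfile, List.reverse_inj, List.ext_getElem?_iff]
  simp only [List.getElem?_map, hpoint]
  exact ⟨fun h i k hk => h k hk i, fun h k hk i => h i k hk⟩

lemma nClasses_cEquiv_eq_card (n : ℕ) : nClasses CEquiv n = Nat.card (ValidProfile n) := by
  let f : {P : List Step // InE P ∧ P.length = n} → ValidProfile n := fun P =>
    ⟨catProfile P.1, realizable_catProfile_of_inE P.2.1, by simp [P.2.2]⟩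
  have hf : Function.Surjective f := by
    rintro ⟨σ, hσ, rfl⟩
    obtain ⟨P, hP, rfl⟩ := hσ.exists_inE
    exact ⟨⟨P, hP, by simp⟩, rfl⟩
  have hker : (fun P Q : {P : List Step // InE P ∧ P.length = n} => CEquiv P.1 Q.1) =
      (Setoid.ker f).r := by
    ext P Q
    rw [cEquiv_iff_catProfile_eq P.2.1 Q.2.1 (P.2.2.trans Q.2.2.symm)]
    exact Subtype.ext_iff.symm.trans (Setoid.ker_def (f := f)).symm
  rw [nClasses, hker]
  exact Nat.card_congr (Setoid.quotientKerEquivOfSurjective f hf)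

/-- The number `c n` of C-equivalence classes of paths of length `n` in ℰ
satisfies `c 0 = 1`, `c 1 = 0` and the Fibonacci-like recurrence
`c n = c (n-1) + c (n-2)` for `n ≥ 2`. -/
theorem count_CEquiv_classes :
    nClasses CEquiv 0 = 1 ∧ nClasses CEquiv 1 = 0 ∧
    ∀ n, 2 ≤ n → nClasses CEquiv n = nClasses CEquiv (n - 1) + nClasses CEquiv (n - 2) := by
  simp only [nClasses_cEquiv_eq_card]
  refine ⟨Nat.card_unique, Nat.card_of_isEmpty, fun n hn => ?_⟩
  obtain ⟨m, rfl⟩ := Nat.exists_eq_add_of_le' hn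
  exact card_validProfile_add_two m
end
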